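/- arXiv:2511.03887 — 7 statements merged into one kernel-verified Lean document; each statement's English description precedes it below -/
import Mathlib

section
/- Let G be a topological group and let (U_n)_{n ∈ ℤ} be a family of open, symmetric identity neighborhoods of G (so 1 ∈ U_n, U_n is open, and g ∈ U_n iff g⁻¹ ∈ U_n) such that U_n · U_n · U_n ⊆ U_{n+1} for every n ∈ ℤ and ⋃_{n ∈ ℤ} U_n = G. Define ‖g‖ = inf{2^n : n ∈ ℤ, g ∈ U_n} and d(g,h) = inf{‖x_0⁻¹x_1‖ + ⋯ + ‖x_{n-1}⁻¹x_n‖ : n ∈ ℕ, x_0, …, x_n ∈ G, x_0 = g, x_n = h}. Then d is a continuous, left-invariant pseudometric on G and satisfies (1/2)·‖g⁻¹h‖ ≤ d(g,h) ≤ ‖g⁻¹h‖ for all g, h ∈ G. -/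
open Pointwise

/-- A continuous, left-invariant pseudometric on a topological group `G`. -/
structure IsContLeftInvPseudometric (G : Type*) [Group G] [TopologicalSpace G]
    (d : G → G → ℝ) : Prop where
  continuous : Continuous fun p : G × G => d p.1 p.2
  self : ∀ x : G, d x x = 0
  symm : ∀ x y : G, d x y = d y x
  nonneg : ∀ x y : G, 0 ≤ d x y
  triangle : ∀ x y z : G, d x z ≤ d x y + d y z
  left_inv : ∀ g x y : G, d (g * x) (g * y) = d x y

/-- A subset `A` of a topological group `G` is coarsely bounded in `G` if it has
finite diameter with respect to every continuous left-invariant pseudometric on `G`. -/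
def IsCoarselyBounded (G : Type*) [Group G] [TopologicalSpace G] (A : Set G) : Prop :=
  ∀ d : G → G → ℝ, IsContLeftInvPseudometric G d →
    ∃ M : ℝ, ∀ a ∈ A, ∀ b ∈ A, d a b ≤ M

/-- The word length of `g` with respect to a generating set `S`: the least `n` such
that `g` is a product of `n` elements of `S`. -/
noncomputable def wordLength {G : Type*} [Group G] (S : Set G) (g : G) : ℕ :=
  sInf {n : ℕ | ∃ l : List G, l.length = n ∧ (∀ s ∈ l, s ∈ S) ∧ l.prod = g}

/-- `G` admits a geometry if there is a continuous left-invariant pseudometric on `G`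
which dominates, in the coarse Lipschitz sense, every continuous left-invariant
pseudometric on `G`. -/
def AdmitsAGeometry (G : Type*) [Group G] [TopologicalSpace G] : Prop :=
  ∃ d : G → G → ℝ, IsContLeftInvPseudometric G d ∧
    ∀ d' : G → G → ℝ, IsContLeftInvPseudometric G d' →
      ∃ L K : ℝ, 0 < L ∧ 0 ≤ K ∧ ∀ g h : G, d' g h ≤ L * d g h + K

/-!
Chains turn any nonnegative, inversion-invariant `N : G → ℝ` into a left-invariant pseudometric
`chainDist N` with `chainDist N g h ≤ N (g⁻¹ * h)`, continuous as soon as `N` is small near `1`.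
The lower bound is Birkhoff's halving argument: if a chain has total length `S < 2 ^ n`, cut it at
the step where the partial sums cross `S / 2`. Both halves have length `< 2 ^ (n - 1)`, so by
induction they, and the single middle step, lie in `U (n - 1)`, and the cube condition puts the
whole product in `U n`. Hence `‖g⁻¹ h‖ ≤ 2 ^ n` whenever some chain from `g` to `h` is shorter than
`2 ^ n`, which gives `‖g⁻¹ h‖ ≤ 2 d(g, h)`.
-/

open Filter Topology Finset

theorem exists_le_le_succ_of_le_of_le {α : Type*} [LinearOrder α] {P : ℕ → α} {c : α}
    {a b : ℕ} (hab : a < b) (ha : P a ≤ c) (hb : c ≤ P b) :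
    ∃ j, a ≤ j ∧ j < b ∧ P j ≤ c ∧ c ≤ P (j + 1) := by
  induction b, hab using Nat.le_induction with
  | base => exact ⟨a, le_rfl, a.lt_succ_self, ha, hb⟩
  | succ b hab ih =>
    by_cases hcb : c ≤ P b
    · obtain ⟨j, haj, hjb, hj⟩ := ih hcb
      exact ⟨j, haj, hjb.trans b.lt_succ_self, hj⟩
    · exact ⟨b, by omega, b.lt_succ_self, (not_le.1 hcb).le, hb⟩

theorem exists_sum_Ico_le_half {f : ℕ → ℝ} (hf : ∀ i, 0 ≤ f i) {a b : ℕ} (hab : a < b) :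
    ∃ j, a ≤ j ∧ j < b ∧ ∑ i ∈ Ico a j, f i ≤ (∑ i ∈ Ico a b, f i) / 2 ∧
      ∑ i ∈ Ico (j + 1) b, f i ≤ (∑ i ∈ Ico a b, f i) / 2 := by
  have hS : 0 ≤ ∑ i ∈ Ico a b, f i := sum_nonneg fun i _ => hf i
  obtain ⟨j, haj, hjb, hpre, hcross⟩ :=
    exists_le_le_succ_of_le_of_le (P := fun j => ∑ i ∈ Ico a j, f i)
      (c := (∑ i ∈ Ico a b, f i) / 2) hab (by simpa using by linarith) (by linarith)
  refine ⟨j, haj, hjb, hpre, ?_⟩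
  have := sum_Ico_consecutive f (by omega : a ≤ j + 1) hjb
  linarith

theorem le_two_mul_of_forall_lt_zpow {a r : ℝ} (hr : 0 ≤ r)
    (h : ∀ m : ℤ, r < 2 ^ m → a ≤ 2 ^ m) : a ≤ 2 * r := by
  by_contra! har
  obtain ⟨m, hm, hm'⟩ := exists_mem_Ioc_zpow (by linarith : 0 < a / 2) one_lt_two
  have := h (m + 1) (by linarith)
  rw [zpow_add_one₀ two_ne_zero] at this
  linarith

section ChainDist

variable {G : Type*} [Group G] {N : G → ℝ}

def chainLengths (N : G → ℝ) (g h : G) : Set ℝ :=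
  {r : ℝ | ∃ (n : ℕ) (x : ℕ → G), x 0 = g ∧ x n = h ∧
    r = ∑ i ∈ range n, N ((x i)⁻¹ * x (i + 1))}

noncomputable def chainDist (N : G → ℝ) (g h : G) : ℝ :=
  sInf (chainLengths N g h)

theorem mem_chainLengths_single (g h : G) : N (g⁻¹ * h) ∈ chainLengths N g h :=
  ⟨1, fun i => if i = 0 then g else h, by simp, by simp, by simp⟩

theorem zero_mem_chainLengths_self (g : G) : 0 ∈ chainLengths N g g :=
  ⟨0, fun _ => g, rfl, rfl, by simp⟩

theorem nonneg_of_mem_chainLengths (hN : ∀ g, 0 ≤ N g) {g h : G} {r : ℝ}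
    (hr : r ∈ chainLengths N g h) : 0 ≤ r := by
  obtain ⟨n, x, -, -, rfl⟩ := hr
  exact sum_nonneg fun i _ => hN _

theorem add_mem_chainLengths {g h k : G} {r s : ℝ} (hr : r ∈ chainLengths N g h)
    (hs : s ∈ chainLengths N h k) : r + s ∈ chainLengths N g k := by
  obtain ⟨n, x, hx0, hxn, rfl⟩ := hr
  obtain ⟨m, y, hy0, hym, rfl⟩ := hs
  set z : ℕ → G := fun i => if i ≤ n then x i else y (i - n)
  have hz : ∀ i, z (n + i) = y i := by
    intro i
    rcases Nat.eq_zero_or_pos i with rfl | hi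
    · simp [z, hxn, hy0]
    · simp [z, Nat.not_le.2 (by omega : n < n + i)]
  refine ⟨n + m, z, by simp [z, hx0], by rw [hz, hym], ?_⟩
  rw [sum_range_add]
  congr 1
  · refine sum_congr rfl fun i hi => ?_
    have hi : i < n := mem_range.1 hi
    simp [z, hi.le, Nat.succ_le_of_lt hi]
  · refine sum_congr rfl fun i _ => ?_
    rw [add_assoc, hz, hz]

theorem mem_chainLengths_swap (hNinv : ∀ g, N g⁻¹ = N g) {g h : G} {r : ℝ}
    (hr : r ∈ chainLengths N g h) : r ∈ chainLengths N h g := by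
  obtain ⟨n, x, h0, hn, rfl⟩ := hr
  refine ⟨n, fun i => x (n - i), by simp [hn], by simp [h0], ?_⟩
  rw [← sum_range_reflect]
  refine sum_congr rfl fun i hi => ?_
  have hi : i < n := mem_range.1 hi
  dsimp only
  rw [show n - i = n - 1 - i + 1 by omega, show n - (i + 1) = n - 1 - i by omega, ← hNinv]
  simp

theorem chainLengths_mul_left (g a b : G) :
    chainLengths N (g * a) (g * b) = chainLengths N a b := by
  suffices ∀ (g a b : G), chainLengths N a b ⊆ chainLengths N (g * a) (g * b) by
    refine (this g a b).antisymm' ?_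
    simpa using this g⁻¹ (g * a) (g * b)
  rintro g a b r ⟨n, x, h0, hn, rfl⟩
  exact ⟨n, fun i => g * x i, by simp [h0], by simp [hn], by simp [mul_assoc]⟩

theorem bddBelow_chainLengths (hN : ∀ g, 0 ≤ N g) (g h : G) : BddBelow (chainLengths N g h) :=
  ⟨0, fun _ => nonneg_of_mem_chainLengths hN⟩

theorem le_chainDist {c : ℝ} {g h : G} (hc : ∀ r ∈ chainLengths N g h, c ≤ r) :
    c ≤ chainDist N g h :=
  le_csInf ⟨_, mem_chainLengths_single g h⟩ hc

theorem chainDist_le (hN : ∀ g, 0 ≤ N g) (g h : G) : chainDist N g h ≤ N (g⁻¹ * h) :=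
  csInf_le (bddBelow_chainLengths hN g h) (mem_chainLengths_single g h)

theorem chainDist_nonneg (hN : ∀ g, 0 ≤ N g) (g h : G) : 0 ≤ chainDist N g h :=
  le_chainDist fun _ => nonneg_of_mem_chainLengths hN

theorem chainDist_self (hN : ∀ g, 0 ≤ N g) (g : G) : chainDist N g g = 0 :=
  (csInf_le (bddBelow_chainLengths hN g g) (zero_mem_chainLengths_self g)).antisymm
    (chainDist_nonneg hN g g)

theorem chainDist_comm (hNinv : ∀ g, N g⁻¹ = N g) (g h : G) :
    chainDist N g h = chainDist N h g :=
  congrArg sInf <| Set.ext fun _ => ⟨mem_chainLengths_swap hNinv, mem_chainLengths_swap hNinv⟩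

theorem chainDist_triangle (hN : ∀ g, 0 ≤ N g) (g h k : G) :
    chainDist N g k ≤ chainDist N g h + chainDist N h k := by
  have hsum : ∀ r ∈ chainLengths N g h, ∀ s ∈ chainLengths N h k, chainDist N g k ≤ r + s :=
    fun r hr s hs => csInf_le (bddBelow_chainLengths hN g k) (add_mem_chainLengths hr hs)
  have : ∀ r ∈ chainLengths N g h, chainDist N g k - chainDist N h k ≤ r := fun r hr => by
    have := le_chainDist fun s hs => sub_le_iff_le_add'.2 (hsum r hr s hs)
    linarith
  linarith [le_chainDist this]

theorem chainDist_mul_left (g a b : G) : chainDist N (g * a) (g * b) = chainDist N a b := by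
  rw [chainDist, chainDist, chainLengths_mul_left]

theorem continuous_chainDist [TopologicalSpace G] [IsTopologicalGroup G] (hN : ∀ g, 0 ≤ N g)
    (hNinv : ∀ g, N g⁻¹ = N g) (hN1 : Tendsto N (𝓝 1) (𝓝 0)) :
    Continuous fun p : G × G => chainDist N p.1 p.2 := by
  rw [continuous_iff_continuousAt]
  rintro ⟨g, h⟩
  have hnear : ∀ a : G, Tendsto (fun b => N (a⁻¹ * b)) (𝓝 a) (𝓝 0) := fun a =>
    hN1.comp <| by simpa using (continuous_const_mul a⁻¹).tendsto a
  have hbound : ∀ p : G × G, dist (chainDist N p.1 p.2) (chainDist N g h) ≤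
      N (g⁻¹ * p.1) + N (h⁻¹ * p.2) := fun p => by
    have := chainDist_triangle hN p.1 g p.2
    have := chainDist_triangle hN g p.1 h
    have := chainDist_triangle hN g h p.2
    have := chainDist_triangle hN p.1 p.2 h
    have := chainDist_le hN g p.1
    have := chainDist_le hN h p.2
    rw [chainDist_comm hNinv p.1 g, chainDist_comm hNinv p.2 h] at *
    rw [Real.dist_eq, abs_sub_le_iff]
    constructor <;> linarith
  refine tendsto_iff_dist_tendsto_zero.2 (squeeze_zero (fun _ => dist_nonneg) hbound ?_)
  simpa using ((hnear g).comp (continuous_fst.tendsto _)).add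
    ((hnear h).comp (continuous_snd.tendsto _))

theorem isContLeftInvPseudometric_chainDist [TopologicalSpace G] [IsTopologicalGroup G]
    (hN : ∀ g, 0 ≤ N g) (hNinv : ∀ g, N g⁻¹ = N g) (hN1 : Tendsto N (𝓝 1) (𝓝 0)) :
    IsContLeftInvPseudometric G (chainDist N) :=
  ⟨continuous_chainDist hN hNinv hN1, chainDist_self hN, chainDist_comm hNinv,
    chainDist_nonneg hN, chainDist_triangle hN, chainDist_mul_left⟩

end ChainDist

section BirkhoffNorm

variable {G : Type*} {U : ℤ → Set G}

noncomputable def birkhoffNorm (U : ℤ → Set G) (g : G) : ℝ :=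
  sInf {r : ℝ | ∃ n : ℤ, g ∈ U n ∧ r = 2 ^ n}

theorem birkhoffNorm_nonneg (g : G) : 0 ≤ birkhoffNorm U g :=
  Real.sInf_nonneg <| by
    rintro r ⟨n, -, rfl⟩
    positivity

theorem birkhoffNorm_le_of_mem {g : G} {n : ℤ} (hg : g ∈ U n) : birkhoffNorm U g ≤ 2 ^ n :=
  csInf_le ⟨0, by rintro r ⟨m, -, rfl⟩; positivity⟩ ⟨n, hg, rfl⟩

variable [Group G]

theorem birkhoffNorm_inv (hsymm : ∀ n, ∀ g : G, g ∈ U n ↔ g⁻¹ ∈ U n) (g : G) :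
    birkhoffNorm U g⁻¹ = birkhoffNorm U g := by
  simp only [birkhoffNorm, ← hsymm]

theorem tendsto_birkhoffNorm_nhds_one [TopologicalSpace G] (hopen : ∀ n, IsOpen (U n))
    (hone : ∀ n, (1 : G) ∈ U n) : Tendsto (birkhoffNorm U) (𝓝 1) (𝓝 0) := by
  refine tendsto_order.2 ⟨fun a ha => .of_forall fun g => ha.trans_le (birkhoffNorm_nonneg g),
    fun ε hε => ?_⟩
  obtain ⟨n, hn, -⟩ := exists_mem_Ioc_zpow hε one_lt_two
  filter_upwards [(hopen n).mem_nhds (hone n)] with g hg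
  exact (birkhoffNorm_le_of_mem hg).trans_lt hn

theorem monotone_of_one_mem_of_mul_mul_mem (hone : ∀ n, (1 : G) ∈ U n)
    (hcube : ∀ n, ∀ u ∈ U n, ∀ v ∈ U n, ∀ w ∈ U n, u * v * w ∈ U (n + 1)) : Monotone U :=
  monotone_int_of_le_succ fun n g hg => by simpa using hcube n g hg 1 (hone n) 1 (hone n)

theorem mem_of_birkhoffNorm_lt (hone : ∀ n, (1 : G) ∈ U n)
    (hcube : ∀ n, ∀ u ∈ U n, ∀ v ∈ U n, ∀ w ∈ U n, u * v * w ∈ U (n + 1))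
    (hunion : ∀ g : G, ∃ n, g ∈ U n) {g : G} {n : ℤ} (hg : birkhoffNorm U g < 2 ^ n) :
    g ∈ U (n - 1) := by
  obtain ⟨m, hm⟩ := hunion g
  obtain ⟨_, ⟨k, hk, rfl⟩, hkn⟩ := exists_lt_of_csInf_lt (by exact ⟨2 ^ m, m, hm, rfl⟩) hg
  have : k < n := (zpow_lt_zpow_iff_right₀ one_lt_two).1 hkn
  exact monotone_of_one_mem_of_mul_mul_mem hone hcube (by omega) hk

theorem mem_of_sum_birkhoffNorm_lt (hone : ∀ n, (1 : G) ∈ U n)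
    (hcube : ∀ n, ∀ u ∈ U n, ∀ v ∈ U n, ∀ w ∈ U n, u * v * w ∈ U (n + 1))
    (hunion : ∀ g : G, ∃ n, g ∈ U n) (x : ℕ → G) {a b : ℕ} (hab : a ≤ b) {n : ℤ}
    (hsum : ∑ i ∈ Ico a b, birkhoffNorm U ((x i)⁻¹ * x (i + 1)) < 2 ^ n) :
    (x a)⁻¹ * x b ∈ U n := by
  induction hk : b - a using Nat.strong_induction_on generalizing a b n with
  | _ k ih =>
    rcases hab.eq_or_lt with rfl | hab
    · simpa using hone n
    set f : ℕ → ℝ := fun i => birkhoffNorm U ((x i)⁻¹ * x (i + 1))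
    obtain ⟨j, haj, hjb, hpre, hsuf⟩ :=
      exists_sum_Ico_le_half (f := f) (fun i => birkhoffNorm_nonneg _) hab
    have hhalf : (∑ i ∈ Ico a b, f i) / 2 < 2 ^ (n - 1) := by
      rw [zpow_sub_one₀ two_ne_zero]
      linarith
    have hmid : f j < 2 ^ n :=
      (single_le_sum (f := f) (fun i _ => birkhoffNorm_nonneg _) (mem_Ico.2 ⟨haj, hjb⟩)).trans_lt
        hsum
    have := hcube (n - 1) _ (ih (j - a) (by omega) haj (hpre.trans_lt hhalf) rfl)
      _ (mem_of_birkhoffNorm_lt hone hcube hunion hmid)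
      _ (ih (b - (j + 1)) (by omega) hjb (hsuf.trans_lt hhalf) rfl)
    simpa [mul_assoc] using this

theorem birkhoffNorm_le_two_mul_of_mem_chainLengths (hone : ∀ n, (1 : G) ∈ U n)
    (hcube : ∀ n, ∀ u ∈ U n, ∀ v ∈ U n, ∀ w ∈ U n, u * v * w ∈ U (n + 1))
    (hunion : ∀ g : G, ∃ n, g ∈ U n) {g h : G} {r : ℝ}
    (hr : r ∈ chainLengths (birkhoffNorm U) g h) : birkhoffNorm U (g⁻¹ * h) ≤ 2 * r := by
  refine le_two_mul_of_forall_lt_zpow (nonneg_of_mem_chainLengths birkhoffNorm_nonneg hr)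
    fun m hm => birkhoffNorm_le_of_mem ?_
  obtain ⟨n, x, rfl, rfl, rfl⟩ := hr
  rw [range_eq_Ico] at hm
  exact mem_of_sum_birkhoffNorm_lt hone hcube hunion x n.zero_le hm

end BirkhoffNorm

/-- Birkhoff's lemma: the pseudometric built from a chain of symmetric identity
neighborhoods `U n` with `U n * U n * U n ⊆ U (n+1)` exhausting `G` is a continuous
left-invariant pseudometric comparable with the associated norm. -/
theorem birkhoff_pseudometric {G : Type*} [Group G] [TopologicalSpace G] [IsTopologicalGroup G]
    (U : ℤ → Set G)
    (hopen : ∀ n, IsOpen (U n))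
    (hone : ∀ n, (1 : G) ∈ U n)
    (hsymm : ∀ n, ∀ g : G, g ∈ U n ↔ g⁻¹ ∈ U n)
    (hcube : ∀ n, ∀ u ∈ U n, ∀ v ∈ U n, ∀ w ∈ U n, u * v * w ∈ U (n + 1))
    (hunion : ∀ g : G, ∃ n, g ∈ U n)
    (norm : G → ℝ)
    (hnorm : ∀ g : G, norm g = sInf {r : ℝ | ∃ n : ℤ, g ∈ U n ∧ r = 2 ^ n})
    (d : G → G → ℝ)
    (hd : ∀ g h : G, d g h = sInf {r : ℝ |
      ∃ (n : ℕ) (x : ℕ → G), x 0 = g ∧ x n = h ∧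
        r = ∑ i ∈ Finset.range n, norm ((x i)⁻¹ * x (i + 1))}) :
    IsContLeftInvPseudometric G d ∧
      ∀ g h : G, (1 / 2) * norm (g⁻¹ * h) ≤ d g h ∧ d g h ≤ norm (g⁻¹ * h) := by
  obtain rfl : norm = birkhoffNorm U := funext hnorm
  obtain rfl : d = chainDist (birkhoffNorm U) := funext₂ hd
  refine ⟨isContLeftInvPseudometric_chainDist birkhoffNorm_nonneg (birkhoffNorm_inv hsymm)
      (tendsto_birkhoffNorm_nhds_one hopen hone),
    fun g h => ⟨le_chainDist fun r hr => ?_, chainDist_le birkhoffNorm_nonneg g h⟩⟩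
  linarith [birkhoffNorm_le_two_mul_of_mem_chainLengths hone hcube hunion hr]
end

section
/- Let G be a topological group and let g ∈ G be an element not lying in the topological closure of {1}. Then there exists a continuous left-invariant pseudometric d on G with d(1, g) ≥ 1. In particular, G acts continuously and isometrically on a metric space in which g has a nontrivial orbit. -/
open Pointwise

universe u


/-!
Birkhoff–Kakutani: choose symmetric neighbourhoods `V n` of `1` with `V (n + 1) ^ 3 ⊆ V n` and
`g ∉ V 0`, and put `e u = 2⁻ⁿ` for the least `n` with `u ∉ V n`. Since `e` satisfies
`e (a * b * c) ≤ 2 * max (e a) (e b) (e c)`, the largest pseudometric below `(x, y) ↦ e (x⁻¹ * y)`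
is comparable to it up to a factor `2`; it is left-invariant because `e (x⁻¹ * y)` is, continuous
because `e` is small on the `V n`, and separates `1` from `g` because `e g = 1`. The metric space
is the separation quotient of `G` with this pseudometric, acted on by left multiplication.
-/

open Filter Topology Set NNReal

section NhdsSeq

theorem subset_mul_mul_self {G : Type*} [Group G] {W : Set G} (hW : (1 : G) ∈ W) :
    W ⊆ W * W * W :=
  (subset_mul_left W hW).trans (subset_mul_left _ hW)

variable {G : Type*} [Group G] [TopologicalSpace G]

structure IsBirkhoffKakutaniSeq (V : ℕ → Set G) : Prop where
  mem_nhds (n : ℕ) : V n ∈ 𝓝 1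
  inv_eq (n : ℕ) : (V n)⁻¹ = V n
  mul_mul_subset (n : ℕ) : V (n + 1) * V (n + 1) * V (n + 1) ⊆ V n

namespace IsBirkhoffKakutaniSeq

variable {V : ℕ → Set G}

theorem one_mem (hV : IsBirkhoffKakutaniSeq V) (n : ℕ) : (1 : G) ∈ V n :=
  mem_of_mem_nhds (hV.mem_nhds n)

theorem antitone (hV : IsBirkhoffKakutaniSeq V) : Antitone V :=
  antitone_nat_of_succ_le fun n => (subset_mul_mul_self (hV.one_mem _)).trans (hV.mul_mul_subset n)

theorem inv_mem_iff (hV : IsBirkhoffKakutaniSeq V) {u : G} {n : ℕ} : u⁻¹ ∈ V n ↔ u ∈ V n := by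
  rw [← Set.mem_inv, hV.inv_eq]

end IsBirkhoffKakutaniSeq

theorem exists_nhds_one_inv_eq_mul_mul_subset [IsTopologicalGroup G] {U : Set G} (hU : U ∈ 𝓝 1) :
    ∃ W ∈ 𝓝 (1 : G), W⁻¹ = W ∧ W * W * W ⊆ U := by
  obtain ⟨W₁, hW₁, -, -, hW₁U⟩ := exists_closed_nhds_one_inv_eq_mul_subset hU
  obtain ⟨W, hW, -, hW_inv, hWW₁⟩ := exists_closed_nhds_one_inv_eq_mul_subset hW₁
  have hW_sub : W ⊆ W₁ := (subset_mul_left W (mem_of_mem_nhds hW)).trans hWW₁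
  exact ⟨W, hW, hW_inv, (mul_subset_mul hWW₁ hW_sub).trans hW₁U⟩

theorem exists_isBirkhoffKakutaniSeq_subset [IsTopologicalGroup G] {U : Set G} (hU : U ∈ 𝓝 1) :
    ∃ V : ℕ → Set G, IsBirkhoffKakutaniSeq V ∧ V 0 ⊆ U := by
  choose! F hF_mem hF_inv hF_sub using
    fun (U : Set G) (hU : U ∈ 𝓝 1) => exists_nhds_one_inv_eq_mul_mul_subset hU
  have hmem : ∀ n, F^[n + 1] U ∈ 𝓝 1 := by
    intro n
    induction n with
    | zero => exact hF_mem U hU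
    | succ n ih => rw [Function.iterate_succ_apply']; exact hF_mem _ ih
  refine ⟨fun n => F^[n + 1] U, ⟨hmem, fun n => ?_, fun n => ?_⟩, ?_⟩
  · cases n with
    | zero => exact hF_inv U hU
    | succ n => rw [Function.iterate_succ_apply']; exact hF_inv _ (hmem n)
  · simp only [Function.iterate_succ_apply' F (n + 1)]
    exact hF_sub _ (hmem n)
  · exact (subset_mul_mul_self (mem_of_mem_nhds (hF_mem U hU))).trans (hF_sub U hU)

theorem exists_nhds_one_notMem [IsTopologicalGroup G] {g : G} (hg : g ∉ closure ({1} : Set G)) :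
    ∃ U ∈ 𝓝 (1 : G), g ∉ U := by
  rw [← specializes_iff_mem_closure, specializes_comm, specializes_iff_pure, Filter.not_le] at hg
  simpa using hg

end NhdsSeq

section Gauge

open Classical

noncomputable def nhdsSeqGauge {α : Type*} (V : ℕ → Set α) (u : α) : ℝ≥0 :=
  if h : ∃ n, u ∉ V n then (1 / 2) ^ Nat.find h else 0

variable {α : Type*} {V : ℕ → Set α} {u : α}

theorem pow_le_nhdsSeqGauge_iff (hV : Antitone V) {n : ℕ} :
    (1 / 2 : ℝ≥0) ^ n ≤ nhdsSeqGauge V u ↔ u ∉ V n := by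
  have hr : (1 / 2 : ℝ≥0) ∈ Ioo 0 1 := ⟨half_pos one_pos, NNReal.half_lt_self one_ne_zero⟩
  unfold nhdsSeqGauge
  split_ifs with h
  · rw [(pow_right_strictAnti₀ hr.1 hr.2).le_iff_ge, Nat.find_le_iff]
    exact ⟨fun ⟨m, hmn, hm⟩ hn => hm (hV hmn hn), fun h => ⟨n, le_rfl, h⟩⟩
  · push Not at h
    simp only [h, not_true, (pow_pos hr.1 _).not_ge]

theorem nhdsSeqGauge_lt_of_mem (hV : Antitone V) {n : ℕ} (hu : u ∈ V n) :
    nhdsSeqGauge V u < (1 / 2) ^ n :=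
  not_le.mp fun h => (pow_le_nhdsSeqGauge_iff hV).mp h hu

theorem nhdsSeqGauge_of_forall_mem (hu : ∀ n, u ∈ V n) : nhdsSeqGauge V u = 0 := by
  simp [nhdsSeqGauge, hu]

theorem nhdsSeqGauge_of_notMem_zero (hu : u ∉ V 0) : nhdsSeqGauge V u = 1 := by
  have h : ∃ n, u ∉ V n := ⟨0, hu⟩
  rw [nhdsSeqGauge, dif_pos h, (Nat.find_eq_zero h).mpr hu, pow_zero]

end Gauge

namespace IsBirkhoffKakutaniSeq

open Classical

variable {G : Type*} [Group G] [TopologicalSpace G] {V : ℕ → Set G}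

theorem nhdsSeqGauge_one (hV : IsBirkhoffKakutaniSeq V) : nhdsSeqGauge V 1 = 0 :=
  nhdsSeqGauge_of_forall_mem hV.one_mem

theorem nhdsSeqGauge_inv (hV : IsBirkhoffKakutaniSeq V) (u : G) :
    nhdsSeqGauge V u⁻¹ = nhdsSeqGauge V u := by
  simp only [nhdsSeqGauge, hV.inv_mem_iff]

theorem nhdsSeqGauge_mul_mul_le (hV : IsBirkhoffKakutaniSeq V) (a b c : G) :
    nhdsSeqGauge V (a * b * c) ≤
      2 * max (nhdsSeqGauge V a) (max (nhdsSeqGauge V b) (nhdsSeqGauge V c)) := by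
  by_cases H : ∃ n, a * b * c ∉ V n
  · rw [nhdsSeqGauge, dif_pos H, ← div_le_iff₀' zero_lt_two, ← mul_one_div (_ ^ _), ← pow_succ]
    simp only [le_max_iff, pow_le_nhdsSeqGauge_iff hV.antitone, ← not_and_or]
    rintro ⟨ha, hb, hc⟩
    exact Nat.find_spec H (hV.mul_mul_subset _ (mul_mem_mul (mul_mem_mul ha hb) hc))
  · rw [nhdsSeqGauge, dif_neg H]
    exact zero_le

theorem tendsto_nhdsSeqGauge (hV : IsBirkhoffKakutaniSeq V) :
    Tendsto (fun u => (nhdsSeqGauge V u : ℝ)) (𝓝 1) (𝓝 0) := by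
  rw [Metric.tendsto_nhds]
  intro ε hε
  obtain ⟨n, hn⟩ := exists_pow_lt_of_lt_one hε (by norm_num : (1 / 2 : ℝ) < 1)
  filter_upwards [hV.mem_nhds n] with u hu
  rw [Real.dist_eq, sub_zero, abs_of_nonneg (by positivity)]
  calc (nhdsSeqGauge V u : ℝ) < ((1 / 2 : ℝ≥0) ^ n : ℝ≥0) := by
        exact_mod_cast nhdsSeqGauge_lt_of_mem hV.antitone hu
    _ = (1 / 2 : ℝ) ^ n := by push_cast; ring
    _ < ε := hn

end IsBirkhoffKakutaniSeq

theorem PseudoMetricSpace.dist_ofPreNNDist_map_le {X : Type*} {d : X → X → ℝ≥0}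
    (dist_self : ∀ x, d x x = 0) (dist_comm : ∀ x y, d x y = d y x) {f : X → X}
    (hf : ∀ x y, d (f x) (f y) = d x y) (x y : X) :
    @dist X (PseudoMetricSpace.ofPreNNDist d dist_self dist_comm).toDist (f x) (f y) ≤
      @dist X (PseudoMetricSpace.ofPreNNDist d dist_self dist_comm).toDist x y := by
  rw [dist_ofPreNNDist, dist_ofPreNNDist, NNReal.coe_le_coe]
  refine le_ciInf fun l => ciInf_le_of_le (OrderBot.bddBelow _) (l.map f) (le_of_eq ?_)
  rw [← List.map_cons, ← List.map_singleton (f := f) (a := y), ← List.map_append, List.zipWith_map]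
  simp only [hf]

theorem continuous_of_tendsto_one {G : Type*} [Group G] [TopologicalSpace G]
    [IsTopologicalGroup G] {d : G → G → ℝ} (symm : ∀ x y, d x y = d y x)
    (triangle : ∀ x y z, d x z ≤ d x y + d y z) (left_inv : ∀ g x y, d (g * x) (g * y) = d x y)
    (h : Tendsto (d 1) (𝓝 1) (𝓝 0)) : Continuous fun p : G × G => d p.1 p.2 := by
  have h_nhds : ∀ x₀ : G, Tendsto (d x₀) (𝓝 x₀) (𝓝 0) := fun x₀ => by
    have hx₀ : Tendsto (x₀⁻¹ * ·) (𝓝 x₀) (𝓝 1) := by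
      simpa using (continuous_const_mul x₀⁻¹).tendsto x₀
    have hd : d x₀ = fun x => d 1 (x₀⁻¹ * x) :=
      funext fun x => by rw [← left_inv x₀⁻¹, inv_mul_cancel]
    exact hd ▸ h.comp hx₀
  rw [continuous_iff_continuousAt]
  rintro ⟨x₀, y₀⟩
  have hbound : ∀ p : G × G, |d p.1 p.2 - d x₀ y₀| ≤ d x₀ p.1 + d y₀ p.2 := fun p => by
    have := triangle p.1 x₀ p.2
    have := triangle x₀ y₀ p.2
    have := triangle x₀ p.1 y₀
    have := triangle p.1 p.2 y₀
    rw [abs_le]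
    constructor <;> linarith [symm x₀ p.1, symm y₀ p.2]
  have hsum : Tendsto (fun p : G × G => d x₀ p.1 + d y₀ p.2) (𝓝 (x₀, y₀)) (𝓝 0) := by
    simpa using ((h_nhds x₀).comp (continuous_fst.tendsto (x₀, y₀))).add
      ((h_nhds y₀).comp (continuous_snd.tendsto (x₀, y₀)))
  exact tendsto_iff_dist_tendsto_zero.mpr (squeeze_zero (fun _ => abs_nonneg _) hbound hsum)

theorem PseudoMetricSpace.dist_ofPreNNDist_mul_left {G : Type*} [Group G] {d : G → G → ℝ≥0}
    (dist_self : ∀ x, d x x = 0) (dist_comm : ∀ x y, d x y = d y x)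
    (hd : ∀ g x y, d (g * x) (g * y) = d x y) (g x y : G) :
    @dist G (PseudoMetricSpace.ofPreNNDist d dist_self dist_comm).toDist (g * x) (g * y) =
      @dist G (PseudoMetricSpace.ofPreNNDist d dist_self dist_comm).toDist x y := by
  refine le_antisymm (dist_ofPreNNDist_map_le _ _ (hd g) x y) ?_
  simpa using dist_ofPreNNDist_map_le dist_self dist_comm (hd g⁻¹) (g * x) (g * y)

namespace IsBirkhoffKakutaniSeq

variable {G : Type*} [Group G] [TopologicalSpace G] [IsTopologicalGroup G] {V : ℕ → Set G}

theorem exists_isContLeftInvPseudometric_nhdsSeqGauge_le (hV : IsBirkhoffKakutaniSeq V) :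
    ∃ d : G → G → ℝ, IsContLeftInvPseudometric G d ∧ ∀ u, (nhdsSeqGauge V u : ℝ) ≤ d 1 u := by
  set d₀ : G → G → ℝ≥0 := fun x y => nhdsSeqGauge V (x⁻¹ * y) with hd₀
  have d₀_self : ∀ x, d₀ x x = 0 := fun x => by simp [hd₀, hV.nhdsSeqGauge_one]
  have d₀_comm : ∀ x y, d₀ x y = d₀ y x := fun x y => by
    simp only [hd₀]; rw [← hV.nhdsSeqGauge_inv, mul_inv_rev, inv_inv]
  have d₀_mul_left : ∀ g x y, d₀ (g * x) (g * y) = d₀ x y := fun g x y => by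
    simp [hd₀, mul_assoc]
  have d₀_le : ∀ x₁ x₂ x₃ x₄, d₀ x₁ x₄ ≤ 2 * max (d₀ x₁ x₂) (max (d₀ x₂ x₃) (d₀ x₃ x₄)) :=
    fun x₁ x₂ x₃ x₄ => by
      simpa [hd₀, mul_assoc] using hV.nhdsSeqGauge_mul_mul_le (x₁⁻¹ * x₂) (x₂⁻¹ * x₃) (x₃⁻¹ * x₄)
  let I := PseudoMetricSpace.ofPreNNDist d₀ d₀_self d₀_comm
  let d : G → G → ℝ := fun x y => 2 * @dist G I.toDist x y
  have d_mul_left : ∀ g x y, d (g * x) (g * y) = d x y := fun g x y => by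
    simp only [d, PseudoMetricSpace.dist_ofPreNNDist_mul_left d₀_self d₀_comm d₀_mul_left]
  have d_one_le : ∀ u, d 1 u ≤ 2 * nhdsSeqGauge V u := fun u => by
    simpa [d, hd₀] using PseudoMetricSpace.dist_ofPreNNDist_le d₀ d₀_self d₀_comm 1 u
  have d_tendsto : Tendsto (d 1) (𝓝 1) (𝓝 0) := by
    refine squeeze_zero (fun u => by positivity) d_one_le ?_
    simpa using hV.tendsto_nhdsSeqGauge.const_mul 2
  have d_comm : ∀ x y, d x y = d y x := fun x y => by simp only [d, @dist_comm G I]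
  have d_triangle : ∀ x y z, d x z ≤ d x y + d y z := fun x y z => by
    simp only [d, ← mul_add]
    exact mul_le_mul_of_nonneg_left (@dist_triangle G I x y z) zero_le_two
  refine ⟨d, ⟨continuous_of_tendsto_one d_comm d_triangle d_mul_left d_tendsto,
    fun x => by simp [d], d_comm, fun x y => by positivity, d_triangle, d_mul_left⟩, fun u => ?_⟩
  simpa [hd₀] using PseudoMetricSpace.le_two_mul_dist_ofPreNNDist d₀ d₀_self d₀_comm d₀_le 1 u

end IsBirkhoffKakutaniSeq

theorem exists_isContLeftInvPseudometric_one_le {G : Type*} [Group G] [TopologicalSpace G]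
    [IsTopologicalGroup G] {g : G} (hg : g ∉ closure ({1} : Set G)) :
    ∃ d : G → G → ℝ, IsContLeftInvPseudometric G d ∧ 1 ≤ d 1 g := by
  obtain ⟨U, hU, hgU⟩ := exists_nhds_one_notMem hg
  obtain ⟨V, hV, hVU⟩ := exists_isBirkhoffKakutaniSeq_subset hU
  obtain ⟨d, hd, hd_le⟩ := hV.exists_isContLeftInvPseudometric_nhdsSeqGauge_le
  refine ⟨d, hd, ?_⟩
  simpa [nhdsSeqGauge_of_notMem_zero fun h => hgU (hVU h)] using hd_le g

theorem IsIsometricSMul.continuousSMul {M X : Type*} [TopologicalSpace M] [PseudoMetricSpace X]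
    [SMul M X] [IsIsometricSMul M X] (h : ∀ x : X, Continuous fun c : M => c • x) :
    ContinuousSMul M X := by
  refine ⟨continuous_iff_continuousAt.mpr fun ⟨c₀, x₀⟩ => ?_⟩
  refine tendsto_iff_dist_tendsto_zero.mpr (squeeze_zero (fun _ => dist_nonneg)
    (fun p => dist_triangle (p.1 • p.2) (p.1 • x₀) (c₀ • x₀)) ?_)
  simp only [dist_smul]
  have h₁ : Tendsto (fun p : M × X => dist p.2 x₀) (𝓝 (c₀, x₀)) (𝓝 0) :=
    tendsto_iff_dist_tendsto_zero.mp (continuous_snd.tendsto (c₀, x₀))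
  have h₂ : Tendsto (fun p : M × X => dist (p.1 • x₀) (c₀ • x₀)) (𝓝 (c₀, x₀)) (𝓝 0) :=
    tendsto_iff_dist_tendsto_zero.mp (((h x₀).tendsto c₀).comp (continuous_fst.tendsto (c₀, x₀)))
  simpa using h₁.add h₂

instance SeparationQuotient.instIsIsometricSMul {M X : Type*} [PseudoEMetricSpace X] [SMul M X]
    [IsIsometricSMul M X] : IsIsometricSMul M (SeparationQuotient X) :=
  ⟨fun c => SeparationQuotient.surjective_mk.forall₂.2 fun x y => by
    simp only [← SeparationQuotient.mk_smul, SeparationQuotient.edist_mk, edist_smul_left]⟩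

def WithPseudometric {G : Type*} [Group G] [TopologicalSpace G] {d : G → G → ℝ}
    (_ : IsContLeftInvPseudometric G d) : Type _ := G

namespace WithPseudometric

variable {G : Type*} [Group G] [TopologicalSpace G] {d : G → G → ℝ}
  (hd : IsContLeftInvPseudometric G d)

instance : PseudoMetricSpace (WithPseudometric hd) where
  dist := d
  dist_self := hd.self
  dist_comm := hd.symm
  dist_triangle := hd.triangle

instance : MulAction G (WithPseudometric hd) := Monoid.toMulAction G

instance : IsIsometricSMul G (WithPseudometric hd) :=
  ⟨fun g => Isometry.of_dist_eq (hd.left_inv g)⟩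

instance [IsTopologicalGroup G] : ContinuousSMul G (WithPseudometric hd) :=
  IsIsometricSMul.continuousSMul fun (x : G) => by
    refine continuous_iff_continuousAt.mpr fun c₀ => tendsto_iff_dist_tendsto_zero.mpr ?_
    have hc : Continuous fun c : G => d (c * x) (c₀ * x) :=
      hd.continuous.comp ((continuous_mul_const x).prodMk continuous_const)
    have ht : Tendsto (fun c : G => d (c * x) (c₀ * x)) (𝓝 c₀) (𝓝 0) := by
      simpa [hd.self] using hc.tendsto c₀
    exact ht

end WithPseudometric

theorem IsContLeftInvPseudometric.exists_isometric_continuous_action {G : Type u} [Group G]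
    [TopologicalSpace G] [IsTopologicalGroup G] {d : G → G → ℝ}
    (hd : IsContLeftInvPseudometric G d) {g : G} (hg : 0 < d 1 g) :
    ∃ (X : Type u) (_ : MetricSpace X) (ρ : G → X → X),
      (∀ x : X, ρ 1 x = x) ∧
      (∀ a b : G, ∀ x : X, ρ (a * b) x = ρ a (ρ b x)) ∧
      (∀ a : G, ∀ x y : X, dist (ρ a x) (ρ a y) = dist x y) ∧
      Continuous (fun p : G × X => ρ p.1 p.2) ∧
      ∃ x : X, ρ g x ≠ x := by
  let x₀ : SeparationQuotient (WithPseudometric hd) := SeparationQuotient.mk (1 : G)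
  have h_dist : dist (g • x₀) x₀ = d (g * 1) 1 := rfl
  refine ⟨SeparationQuotient (WithPseudometric hd), inferInstance, fun a x => a • x, one_smul G,
    mul_smul, dist_smul, continuous_smul, x₀, fun (h : g • x₀ = x₀) => hg.ne' ?_⟩
  rw [hd.symm, ← mul_one g, ← h_dist, h, dist_self]

/-- Pontryagin: if `g` is not in the closure of the identity, there is a continuous
left-invariant pseudometric separating `g` from `1`; in particular `G` acts
continuously and isometrically on a metric space in which `g` has a nontrivial orbit. -/
theorem exists_pseudometric_of_not_mem_closure_one {G : Type u} [Group G] [TopologicalSpace G]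
    [IsTopologicalGroup G] (g : G) (hg : g ∉ closure ({1} : Set G)) :
    (∃ d : G → G → ℝ, IsContLeftInvPseudometric G d ∧ 1 ≤ d 1 g) ∧
      ∃ (X : Type u) (_ : MetricSpace X) (ρ : G → X → X),
        (∀ x : X, ρ 1 x = x) ∧
        (∀ a b : G, ∀ x : X, ρ (a * b) x = ρ a (ρ b x)) ∧
        (∀ a : G, ∀ x y : X, dist (ρ a x) (ρ a y) = dist x y) ∧
        Continuous (fun p : G × X => ρ p.1 p.2) ∧
        ∃ x : X, ρ g x ≠ x := by
  obtain ⟨d, hd, hd_one⟩ := exists_isContLeftInvPseudometric_one_le hg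
  exact ⟨⟨d, hd, hd_one⟩, hd.exists_isometric_continuous_action (zero_lt_one.trans_le hd_one)⟩
end

section
/- Let G be a topological group and A ⊆ G. Suppose A satisfies Rosendal's criterion: for every identity neighborhood U ⊆ G there exist a finite subset F ⊆ G and k ∈ ℕ such that every a ∈ A can be written as a product a = f₁u₁⋯f_ℓu_ℓ with ℓ ≤ k, f_i ∈ F and u_i ∈ U. Then A is coarsely bounded in G. -/
open Pointwise

/-!
Fix a continuous left-invariant pseudometric `d` and write `|g| = d 1 g`; by left invariance
`|·|` is subadditive. Apply the criterion to the identity neighborhood `{u | |u| < 1}` to get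
`F` and `k`: each factor `f * u` then has `|f * u| < C + 1` with `C = ∑_{f ∈ F} |f|`, so every
`a ∈ A` has `|a| ≤ k (C + 1)`, and `d a b ≤ |a| + |b|` bounds the diameter of `A`.
-/

namespace IsContLeftInvPseudometric

variable {G : Type*} [Group G] [TopologicalSpace G] {d : G → G → ℝ}

theorem dist_self_mul (hd : IsContLeftInvPseudometric G d) (x y : G) : d x (x * y) = d 1 y := by
  simpa using hd.left_inv x 1 y

theorem dist_one_mul_le (hd : IsContLeftInvPseudometric G d) (x y : G) :
    d 1 (x * y) ≤ d 1 x + d 1 y :=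
  hd.dist_self_mul x y ▸ hd.triangle 1 x (x * y)

theorem dist_one_list_prod_le (hd : IsContLeftInvPseudometric G d) {c : ℝ} {l : List G}
    (hl : ∀ x ∈ l, d 1 x ≤ c) :
    d 1 l.prod ≤ l.length * c := by
  induction l with
  | nil => simp [hd.self]
  | cons x t ih =>
    have ht : d 1 t.prod ≤ t.length * c := ih fun y hy => hl y (List.mem_cons_of_mem x hy)
    calc d 1 (x :: t).prod ≤ d 1 x + d 1 t.prod := by
          simpa using hd.dist_one_mul_le x t.prod
      _ ≤ c + t.length * c := add_le_add (hl x List.mem_cons_self) ht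
      _ = (x :: t).length * c := by push_cast [List.length_cons]; ring

theorem dist_le_dist_one_add (hd : IsContLeftInvPseudometric G d) (a b : G) :
    d a b ≤ d 1 a + d 1 b :=
  hd.symm a 1 ▸ hd.triangle a 1 b

theorem setOf_dist_one_lt_mem_nhds (hd : IsContLeftInvPseudometric G d) {ε : ℝ} (hε : 0 < ε) :
    {u : G | d 1 u < ε} ∈ nhds 1 := by
  have hcont : Continuous fun u : G => d 1 u :=
    hd.continuous.comp (continuous_const.prodMk continuous_id)
  refine hcont.continuousAt.preimage_mem_nhds (t := Set.Iio ε) ?_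
  rw [hd.self]
  exact Iio_mem_nhds hε

end IsContLeftInvPseudometric

theorem isCoarselyBounded_of_forall_dist_one_le {G : Type*} [Group G] [TopologicalSpace G]
    {A : Set G} (hA : ∀ d : G → G → ℝ, IsContLeftInvPseudometric G d →
      ∃ M : ℝ, ∀ a ∈ A, d 1 a ≤ M) :
    IsCoarselyBounded G A := by
  intro d hd
  obtain ⟨M, hM⟩ := hA d hd
  exact ⟨M + M, fun a ha b hb =>
    (hd.dist_le_dist_one_add a b).trans (add_le_add (hM a ha) (hM b hb))⟩

theorem isCoarselyBounded_of_rosendal_criterion_general {G : Type*} [Group G] [TopologicalSpace G]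
    (A : Set G)
    (hA : ∀ U ∈ nhds (1 : G), ∃ (F : Finset G) (k : ℕ),
      ∀ a ∈ A, ∃ ℓ : ℕ, ℓ ≤ k ∧ ∃ f u : Fin ℓ → G,
        (∀ i, f i ∈ F) ∧ (∀ i, u i ∈ U) ∧
        a = (List.ofFn fun i => f i * u i).prod) :
    IsCoarselyBounded G A := by
  refine isCoarselyBounded_of_forall_dist_one_le fun d hd => ?_
  obtain ⟨F, k, hF⟩ := hA _ (hd.setOf_dist_one_lt_mem_nhds one_pos)
  set C : ℝ := ∑ f ∈ F, d 1 f
  have hC : 0 ≤ C := Finset.sum_nonneg fun f _ => hd.nonneg 1 f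
  refine ⟨k * (C + 1), fun a ha => ?_⟩
  obtain ⟨ℓ, hℓ, f, u, hf, hu, rfl⟩ := hF a ha
  have hfactor : ∀ x ∈ List.ofFn (fun i => f i * u i), d 1 x ≤ C + 1 := by
    simp only [List.forall_mem_ofFn_iff]
    intro i
    have hfi : d 1 (f i) ≤ C := Finset.single_le_sum (fun g _ => hd.nonneg 1 g) (hf i)
    have hui : d 1 (u i) < 1 := hu i
    linarith [hd.dist_one_mul_le (f i) (u i)]
  calc d 1 (List.ofFn fun i => f i * u i).prod ≤ ℓ * (C + 1) := by
        simpa using hd.dist_one_list_prod_le hfactor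
    _ ≤ k * (C + 1) := by gcongr

/-- Rosendal's criterion implies coarse boundedness: if for every identity
neighborhood `U` there are a finite set `F` and `k` such that every element of `A`
is a product of at most `k` factors of the form `f * u` with `f ∈ F`, `u ∈ U`,
then `A` is coarsely bounded in `G`. -/
theorem isCoarselyBounded_of_rosendal_criterion {G : Type*} [Group G] [TopologicalSpace G]
    [IsTopologicalGroup G] (A : Set G)
    (hA : ∀ U ∈ nhds (1 : G), ∃ (F : Finset G) (k : ℕ),
      ∀ a ∈ A, ∃ ℓ : ℕ, ℓ ≤ k ∧ ∃ f u : Fin ℓ → G,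
        (∀ i, f i ∈ F) ∧ (∀ i, u i ∈ U) ∧
        a = (List.ofFn fun i => f i * u i).prod) :
    IsCoarselyBounded G A :=
  isCoarselyBounded_of_rosendal_criterion_general A hA
end

section
/- Let G be a topological group, d a continuous left-invariant pseudometric on G, and S ⊆ G a symmetric open identity neighborhood generating G with finite d-diameter, say d(1, s) ≤ M for all s ∈ S, and suppose ε > 0 satisfies {g ∈ G : d(1, g) < 2ε} ⊆ S. Define \widehat{d}_S(g, h) = inf{d(x₀, x₁) + ⋯ + d(x_{n-1}, x_n) : x₀ = g, x_n = h, and x_{i-1}⁻¹x_i ∈ S for all i}. Then: (i) \widehat{d}_S is a continuous left-invariant pseudometric on G; (ii) \widehat{d}_S(g, h) ≤ M · d_S(g, h) for all g, h; and (iii) d_S(g, h) ≤ (2/ε)·\widehat{d}_S(g, h) + (2/ε) + 1 for all g, h, where d_S is the word metric with respect to S. In particular \widehat{d}_S and d_S are quasi-isometric. -/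
open Pointwise

/-!
A chain from `g` to `h` with steps in `S` is the same thing as a word `s₁ ⋯ sₙ` in `S` for
`g⁻¹ * h`, and by left invariance its cost is `∑ d(1, sᵢ)`. Hence `dhat g h = N (g⁻¹ * h)` for the
weighted word length `N`. Concatenating and reversing words make `N` subadditive and symmetric,
and `N ≤ d(1, ·)` on the `2ε`-ball, which gives continuity; evaluating `N` on a word of minimal
length gives the upper bound by `M`. For the lower bound, cut a word greedily into maximal blocks
of cost `< 2ε`: the product of a block lies in the `2ε`-ball, hence in `S`, and a block together
with the next letter costs at least `2ε`, so every `2ε` of cost pays for at most two letters.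
-/

section Words

variable {G : Type*} [Group G] {S : Set G}

def wordsFor (S : Set G) (a : G) : Set (List G) := {l | (∀ s ∈ l, s ∈ S) ∧ l.prod = a}

lemma nil_mem_wordsFor : [] ∈ wordsFor S 1 := ⟨by simp, rfl⟩

lemma singleton_mem_wordsFor {s : G} (hs : s ∈ S) : [s] ∈ wordsFor S s := ⟨by simpa, by simp⟩

lemma append_mem_wordsFor {l₁ l₂ : List G} {a b : G} (h₁ : l₁ ∈ wordsFor S a)
    (h₂ : l₂ ∈ wordsFor S b) : l₁ ++ l₂ ∈ wordsFor S (a * b) :=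
  ⟨fun s hs => (List.mem_append.mp hs).elim (h₁.1 s) (h₂.1 s), by simp [h₁.2, h₂.2]⟩

lemma reverse_map_inv_mem_wordsFor (hS : S⁻¹ = S) {l : List G} {a : G}
    (hl : l ∈ wordsFor S a) : (l.map (·⁻¹)).reverse ∈ wordsFor S a⁻¹ := by
  refine ⟨fun s hs => ?_, by rw [← hl.2, List.prod_inv_reverse]⟩
  obtain ⟨t, ht, rfl⟩ := List.mem_map.mp (List.mem_reverse.mp hs)
  rw [← hS]
  exact Set.inv_mem_inv.mpr (hl.1 t ht)

lemma wordsFor_nonempty (hS : S⁻¹ = S) (hgen : Subgroup.closure S = ⊤) (a : G) :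
    (wordsFor S a).Nonempty := by
  have ha : a ∈ Submonoid.closure (S ∪ S⁻¹) := by
    rw [← Subgroup.closure_toSubmonoid, hgen]; trivial
  rw [hS, Set.union_self] at ha
  exact Submonoid.exists_list_of_mem_closure ha

lemma wordLength_le_length {l : List G} {a : G} (hl : l ∈ wordsFor S a) :
    wordLength S a ≤ l.length :=
  Nat.sInf_le ⟨l, rfl, hl⟩

lemma exists_length_eq_wordLength {a : G} (ha : (wordsFor S a).Nonempty) :
    ∃ l ∈ wordsFor S a, l.length = wordLength S a := by
  obtain ⟨l, hl, hlS, hla⟩ := Nat.sInf_mem (s := {n : ℕ | ∃ l : List G, l.length = n ∧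
    (∀ s ∈ l, s ∈ S) ∧ l.prod = a}) (ha.elim fun l hl => ⟨l.length, l, rfl, hl⟩)
  exact ⟨l, ⟨hlS, hla⟩, hl⟩

lemma wordLength_le_one {s : G} (hs : s ∈ S) : wordLength S s ≤ 1 :=
  wordLength_le_length (singleton_mem_wordsFor hs)

lemma wordLength_mul_le {a b : G} (ha : (wordsFor S a).Nonempty) (hb : (wordsFor S b).Nonempty) :
    wordLength S (a * b) ≤ wordLength S a + wordLength S b := by
  obtain ⟨la, hla, hla_len⟩ := exists_length_eq_wordLength ha
  obtain ⟨lb, hlb, hlb_len⟩ := exists_length_eq_wordLength hb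
  simpa [hla_len, hlb_len] using wordLength_le_length (append_mem_wordsFor hla hlb)

end Words

section Chains

variable {G : Type*} [Group G]

def chainSteps (x : ℕ → G) (n : ℕ) : List G :=
  (List.range n).map fun i => (x i)⁻¹ * x (i + 1)

lemma prod_chainSteps (x : ℕ → G) (n : ℕ) : (chainSteps x n).prod = (x 0)⁻¹ * x n := by
  induction n with
  | zero => simp [chainSteps]
  | succ n ih =>
    simp only [chainSteps, List.range_succ, List.map_append, List.prod_append] at ih ⊢
    simp [ih]

lemma sum_map_chainSteps {d : G → G → ℝ} (hd : ∀ g x y : G, d (g * x) (g * y) = d x y)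
    (x : ℕ → G) (n : ℕ) :
    ((chainSteps x n).map (d 1)).sum = ∑ i ∈ Finset.range n, d (x i) (x (i + 1)) := by
  induction n with
  | zero => simp [chainSteps]
  | succ n ih =>
    simp only [chainSteps, List.range_succ, List.map_append, List.sum_append] at ih ⊢
    have hstep : d 1 ((x n)⁻¹ * x (n + 1)) = d (x n) (x (n + 1)) := by
      rw [← hd (x n), mul_one, mul_inv_cancel_left]
    simp [Finset.sum_range_succ, ← ih, hstep]

lemma inv_mul_partialProd_succ (g : G) (l : List G) {i : ℕ} (hi : i < l.length) :
    (g * (l.take i).prod)⁻¹ * (g * (l.take (i + 1)).prod) = l[i] := by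
  simp [List.prod_take_succ l i hi]

lemma chainSteps_partialProds (g : G) (l : List G) :
    chainSteps (fun i => g * (l.take i).prod) l.length = l :=
  List.ext_getElem (by simp [chainSteps]) fun i _ hi => by
    simpa [chainSteps] using inv_mul_partialProd_succ g l hi

end Chains

section WeightedLength

variable {G : Type*} [Group G] {S : Set G} {w : G → ℝ}

noncomputable def weightedLength (S : Set G) (w : G → ℝ) (a : G) : ℝ :=
  sInf ((fun l => (l.map w).sum) '' wordsFor S a)

lemma chainSums_eq_image_wordsFor {d : G → G → ℝ} (hd : ∀ g x y : G, d (g * x) (g * y) = d x y)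
    (g h : G) :
    {r : ℝ | ∃ (n : ℕ) (x : ℕ → G), x 0 = g ∧ x n = h ∧
        (∀ i < n, (x i)⁻¹ * x (i + 1) ∈ S) ∧
        r = ∑ i ∈ Finset.range n, d (x i) (x (i + 1))} =
      (fun l => (l.map (d 1)).sum) '' wordsFor S (g⁻¹ * h) := by
  ext r
  constructor
  · rintro ⟨n, x, rfl, rfl, hx, rfl⟩
    refine ⟨chainSteps x n, ⟨fun s hs => ?_, prod_chainSteps x n⟩, sum_map_chainSteps hd x n⟩
    obtain ⟨i, hi, rfl⟩ := List.mem_map.mp hs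
    exact hx i (List.mem_range.mp hi)
  · rintro ⟨l, ⟨hlS, hl⟩, rfl⟩
    refine ⟨l.length, fun i => g * (l.take i).prod, by simp, by simp [hl], fun i hi => ?_, ?_⟩
    · rw [inv_mul_partialProd_succ g l hi]
      exact hlS _ (List.getElem_mem hi)
    · rw [← sum_map_chainSteps hd, chainSteps_partialProds]

lemma weightedLength_le_sum (hw : ∀ g, 0 ≤ w g) {l : List G} {a : G} (hl : l ∈ wordsFor S a) :
    weightedLength S w a ≤ (l.map w).sum := by
  refine csInf_le ⟨0, ?_⟩ (Set.mem_image_of_mem _ hl)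
  rintro _ ⟨l', -, rfl⟩
  exact List.sum_nonneg (by simpa using fun s _ => hw s)

lemma le_weightedLength {a : G} {c : ℝ} (ha : (wordsFor S a).Nonempty)
    (h : ∀ l ∈ wordsFor S a, c ≤ (l.map w).sum) : c ≤ weightedLength S w a :=
  le_csInf (ha.image _) (Set.forall_mem_image.mpr h)

lemma weightedLength_nonneg (hw : ∀ g, 0 ≤ w g) (a : G) : 0 ≤ weightedLength S w a := by
  refine Real.sInf_nonneg ?_
  rintro _ ⟨l, -, rfl⟩
  exact List.sum_nonneg (by simpa using fun s _ => hw s)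

lemma weightedLength_one (hw : ∀ g, 0 ≤ w g) : weightedLength S w 1 = 0 :=
  le_antisymm (by simpa using weightedLength_le_sum hw nil_mem_wordsFor)
    (weightedLength_nonneg hw 1)

lemma weightedLength_le_of_mem (hw : ∀ g, 0 ≤ w g) {s : G} (hs : s ∈ S) :
    weightedLength S w s ≤ w s := by
  simpa using weightedLength_le_sum hw (singleton_mem_wordsFor hs)

lemma weightedLength_inv_le (hw : ∀ g, 0 ≤ w g) (hw_inv : ∀ g, w g⁻¹ = w g) (hS : S⁻¹ = S)
    {a : G} (ha : (wordsFor S a).Nonempty) : weightedLength S w a⁻¹ ≤ weightedLength S w a :=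
  le_weightedLength ha fun l hl =>
    (weightedLength_le_sum hw (reverse_map_inv_mem_wordsFor hS hl)).trans_eq
      (by simp [List.map_reverse, Function.comp_def, hw_inv])

lemma weightedLength_inv (hw : ∀ g, 0 ≤ w g) (hw_inv : ∀ g, w g⁻¹ = w g) (hS : S⁻¹ = S)
    {a : G} (ha : (wordsFor S a).Nonempty) : weightedLength S w a⁻¹ = weightedLength S w a := by
  refine le_antisymm (weightedLength_inv_le hw hw_inv hS ha) ?_
  obtain ⟨l, hl⟩ := ha
  simpa using weightedLength_inv_le hw hw_inv hS ⟨_, reverse_map_inv_mem_wordsFor hS hl⟩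

lemma weightedLength_mul_le (hw : ∀ g, 0 ≤ w g) {a b : G} (ha : (wordsFor S a).Nonempty)
    (hb : (wordsFor S b).Nonempty) :
    weightedLength S w (a * b) ≤ weightedLength S w a + weightedLength S w b := by
  have hsplit : ∀ lb ∈ wordsFor S b,
      weightedLength S w (a * b) - (lb.map w).sum ≤ weightedLength S w a :=
    fun lb hlb => le_weightedLength ha fun la hla => by
      have := weightedLength_le_sum hw (append_mem_wordsFor hla hlb)
      rw [List.map_append, List.sum_append] at this
      linarith
  have := le_weightedLength hb fun lb hlb => sub_le_comm.mp (hsplit lb hlb)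
  linarith

lemma weightedLength_le_mul_wordLength (hw : ∀ g, 0 ≤ w g) {M : ℝ} (hM : ∀ s ∈ S, w s ≤ M)
    {a : G} (ha : (wordsFor S a).Nonempty) : weightedLength S w a ≤ M * wordLength S a := by
  obtain ⟨l, hl, hlen⟩ := exists_length_eq_wordLength ha
  calc weightedLength S w a ≤ (l.map w).sum := weightedLength_le_sum hw hl
    _ ≤ (l.map w).length • M :=
      List.sum_le_card_nsmul _ _ (by simpa using fun s hs => hM s (hl.1 s hs))
    _ = M * wordLength S a := by rw [List.length_map, hlen, nsmul_eq_mul, mul_comm]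

end WeightedLength

section Greedy

variable {G : Type*} [Group G] {S : Set G} {w : G → ℝ} {ε : ℝ}

lemma mul_wordLength_le_sum_add (hw : ∀ g, 0 ≤ w g) (hw_one : w 1 = 0)
    (hw_mul : ∀ a b, w (a * b) ≤ w a + w b) (hε : 0 < ε) (hball : {g | w g < 2 * ε} ⊆ S)
    {l : List G} {a : G} (hl : l ∈ wordsFor S a) :
    ε * wordLength S a ≤ (l.map w).sum + ε := by
  have h1S : (1 : G) ∈ S := hball (by simp [hw_one, hε])
  -- `b` is the product of the block under construction, and `w b` bounds its cost from below.
  suffices key : ∀ l : List G, (∀ s ∈ l, s ∈ S) → ∀ b ∈ S,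
      ε * wordLength S (b * l.prod) ≤ (l.map w).sum + w b + ε by
    simpa [hl.2, hw_one] using key l hl.1 1 h1S
  intro l
  induction l with
  | nil =>
    intro _ b hb
    have : (wordLength S b : ℝ) ≤ 1 := by exact_mod_cast wordLength_le_one hb
    simp only [List.prod_nil, mul_one, List.map_nil, List.sum_nil, zero_add]
    nlinarith [hw b]
  | cons s l ih =>
    intro hsl b hb
    have hs : s ∈ S := hsl s List.mem_cons_self
    have hl : ∀ t ∈ l, t ∈ S := fun t ht => hsl t (List.mem_cons_of_mem s ht)
    rw [List.prod_cons, List.map_cons, List.sum_cons, ← mul_assoc]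
    by_cases hbs : w (b * s) < 2 * ε
    · linarith [ih hl (b * s) (hball hbs), hw_mul b s]
    · have hwl : wordLength S (b * s * l.prod) ≤ 2 + wordLength S l.prod :=
        calc wordLength S (b * s * l.prod) ≤ wordLength S (b * s) + wordLength S l.prod :=
              wordLength_mul_le
                ⟨_, append_mem_wordsFor (singleton_mem_wordsFor hb) (singleton_mem_wordsFor hs)⟩
                ⟨l, hl, rfl⟩
          _ ≤ wordLength S b + wordLength S s + wordLength S l.prod :=
              Nat.add_le_add_right (wordLength_mul_le ⟨_, singleton_mem_wordsFor hb⟩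
                ⟨_, singleton_mem_wordsFor hs⟩) _
          _ ≤ 2 + wordLength S l.prod := by
              linarith [wordLength_le_one hb, wordLength_le_one hs]
      have hwl' : ε * wordLength S (b * s * l.prod) ≤ ε * (2 + wordLength S l.prod) :=
        mul_le_mul_of_nonneg_left (by exact_mod_cast hwl) hε.le
      have := ih hl 1 h1S
      rw [one_mul, hw_one] at this
      linarith [hw_mul b s]

lemma mul_wordLength_le_weightedLength_add (hw : ∀ g, 0 ≤ w g) (hw_one : w 1 = 0)
    (hw_mul : ∀ a b, w (a * b) ≤ w a + w b) (hε : 0 < ε) (hball : {g | w g < 2 * ε} ⊆ S)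
    {a : G} (ha : (wordsFor S a).Nonempty) :
    ε * wordLength S a ≤ weightedLength S w a + ε := by
  have := le_weightedLength ha fun l hl =>
    sub_le_iff_le_add.mpr (mul_wordLength_le_sum_add hw hw_one hw_mul hε hball hl)
  linarith

end Greedy

open Filter Topology in
lemma continuous_of_locally_le {X : Type*} [TopologicalSpace X] {d e : X → X → ℝ}
    (hd : Continuous fun p : X × X => d p.1 p.2) (hd_self : ∀ x, d x x = 0)
    (he_symm : ∀ x y, e x y = e y x) (he_tri : ∀ x y z, e x z ≤ e x y + e y z)
    {r : ℝ} (hr : 0 < r) (hle : ∀ x y, d x y < r → e x y ≤ d x y) :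
    Continuous fun p : X × X => e p.1 p.2 := by
  rw [continuous_iff_continuousAt]
  rintro ⟨a, b⟩
  have hda : Continuous fun p : X × X => d a p.1 := hd.comp (continuous_const.prodMk continuous_fst)
  have hdb : Continuous fun p : X × X => d b p.2 := hd.comp (continuous_const.prodMk continuous_snd)
  have hlim : Tendsto (fun p : X × X => d a p.1 + d b p.2) (𝓝 (a, b)) (𝓝 0) := by
    simpa [hd_self] using (hda.tendsto (a, b)).add (hdb.tendsto (a, b))
  have hnear : ∀ᶠ p : X × X in 𝓝 (a, b), d a p.1 < r ∧ d b p.2 < r :=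
    (hda.continuousAt.eventually_lt continuousAt_const (by simpa [hd_self] using hr)).and
      (hdb.continuousAt.eventually_lt continuousAt_const (by simpa [hd_self] using hr))
  refine tendsto_iff_dist_tendsto_zero.mpr
    (squeeze_zero' (Eventually.of_forall fun _ => dist_nonneg) ?_ hlim)
  filter_upwards [hnear] with p ⟨hpa, hpb⟩
  have h1 := hle a p.1 hpa
  have h2 := hle b p.2 hpb
  rw [Real.dist_eq, abs_sub_le_iff]
  constructor
  · linarith [he_tri p.1 a p.2, he_tri a b p.2, he_symm p.1 a]
  · linarith [he_tri a p.1 b, he_tri p.1 p.2 b, he_symm p.2 b]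

namespace IsContLeftInvPseudometric

variable {G : Type*} [Group G] [TopologicalSpace G] {d : G → G → ℝ}

lemma apply_eq_one_inv_mul (hd : IsContLeftInvPseudometric G d) (g h : G) :
    d g h = d 1 (g⁻¹ * h) := by
  rw [← hd.left_inv g⁻¹, inv_mul_cancel]

lemma apply_one_inv (hd : IsContLeftInvPseudometric G d) (a : G) : d 1 a⁻¹ = d 1 a := by
  rw [← hd.left_inv a, mul_one, mul_inv_cancel, hd.symm]

lemma apply_one_mul_le (hd : IsContLeftInvPseudometric G d) (a b : G) :
    d 1 (a * b) ≤ d 1 a + d 1 b := by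
  have := hd.triangle 1 a (a * b)
  rwa [hd.apply_eq_one_inv_mul a, inv_mul_cancel_left] at this

lemma of_length (hd : IsContLeftInvPseudometric G d) {N : G → ℝ} (h_one : N 1 = 0)
    (h_inv : ∀ a, N a⁻¹ = N a) (h_mul : ∀ a b, N (a * b) ≤ N a + N b) {r : ℝ} (hr : 0 < r)
    (hle : ∀ a, d 1 a < r → N a ≤ d 1 a) :
    IsContLeftInvPseudometric G fun g h => N (g⁻¹ * h) := by
  have symm : ∀ g h : G, N (g⁻¹ * h) = N (h⁻¹ * g) := fun g h => by
    rw [← h_inv, mul_inv_rev, inv_inv]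
  have triangle : ∀ g h k : G, N (g⁻¹ * k) ≤ N (g⁻¹ * h) + N (h⁻¹ * k) := fun g h k => by
    simpa [mul_assoc] using h_mul (g⁻¹ * h) (h⁻¹ * k)
  refine ⟨continuous_of_locally_le hd.continuous hd.self symm triangle hr fun g h hgh => ?_,
    fun g => by simp [h_one], symm, fun g h => ?_, triangle, fun g x y => by simp [mul_assoc]⟩
  · rw [hd.apply_eq_one_inv_mul] at hgh ⊢
    exact hle _ hgh
  · have := h_mul (g⁻¹ * h) (g⁻¹ * h)⁻¹
    rw [mul_inv_cancel, h_one, h_inv] at this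
    linarith

end IsContLeftInvPseudometric

theorem rosendal_hat_pseudometric_general {G : Type*} [Group G] [TopologicalSpace G]
    (d : G → G → ℝ) (hd : IsContLeftInvPseudometric G d)
    (S : Set G) (hsymm : S⁻¹ = S)
    (hgen : Subgroup.closure S = ⊤)
    (M : ℝ) (hM : ∀ s ∈ S, d 1 s ≤ M)
    (ε : ℝ) (hε : 0 < ε) (hball : {g : G | d 1 g < 2 * ε} ⊆ S)
    (dhat : G → G → ℝ)
    (hdhat : ∀ g h : G, dhat g h = sInf {r : ℝ |
      ∃ (n : ℕ) (x : ℕ → G), x 0 = g ∧ x n = h ∧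
        (∀ i < n, (x i)⁻¹ * x (i + 1) ∈ S) ∧
        r = ∑ i ∈ Finset.range n, d (x i) (x (i + 1))}) :
    IsContLeftInvPseudometric G dhat ∧
      (∀ g h : G, dhat g h ≤ M * (wordLength S (g⁻¹ * h) : ℝ)) ∧
      (∀ g h : G, (wordLength S (g⁻¹ * h) : ℝ) ≤ (2 / ε) * dhat g h + 2 / ε + 1) := by
  have hw : ∀ g, 0 ≤ d 1 g := hd.nonneg 1
  have hwords := wordsFor_nonempty hsymm hgen
  obtain rfl : dhat = fun g h => weightedLength S (d 1) (g⁻¹ * h) := by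
    funext g h
    rw [hdhat, chainSums_eq_image_wordsFor hd.left_inv]
    rfl
  refine ⟨hd.of_length (weightedLength_one hw)
      (fun a => weightedLength_inv hw hd.apply_one_inv hsymm (hwords a))
      (fun a b => weightedLength_mul_le hw (hwords a) (hwords b)) (by positivity)
      (fun a ha => weightedLength_le_of_mem hw (hball ha)),
    fun g h => weightedLength_le_mul_wordLength hw hM (hwords _), fun g h => ?_⟩
  have hlen := mul_wordLength_le_weightedLength_add hw (hd.self 1) hd.apply_one_mul_le hε hball
    (hwords (g⁻¹ * h))
  have hnn := weightedLength_nonneg hw (S := S) (g⁻¹ * h)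
  refine le_of_mul_le_mul_left ?_ hε
  calc ε * (wordLength S (g⁻¹ * h) : ℝ) ≤ weightedLength S (d 1) (g⁻¹ * h) + ε := hlen
    _ ≤ ε * (2 / ε * weightedLength S (d 1) (g⁻¹ * h) + 2 / ε + 1) := by
      field_simp
      linarith

/-- Rosendal's Lemma 2.70: given a continuous left-invariant pseudometric `d` and a
symmetric open identity neighborhood `S` generating `G` with `d`-diameter at most `M`,
and `ε > 0` with the `2ε`-ball contained in `S`, the infimal-chain pseudometric
`dhat` is a continuous left-invariant pseudometric quasi-isometric to the word
metric `d_S`. -/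
theorem rosendal_hat_pseudometric {G : Type*} [Group G] [TopologicalSpace G]
    [IsTopologicalGroup G]
    (d : G → G → ℝ) (hd : IsContLeftInvPseudometric G d)
    (S : Set G) (hsymm : S⁻¹ = S) (hSopen : IsOpen S) (h1S : (1 : G) ∈ S)
    (hgen : Subgroup.closure S = ⊤)
    (M : ℝ) (hM : ∀ s ∈ S, d 1 s ≤ M)
    (ε : ℝ) (hε : 0 < ε) (hball : {g : G | d 1 g < 2 * ε} ⊆ S)
    (dhat : G → G → ℝ)
    (hdhat : ∀ g h : G, dhat g h = sInf {r : ℝ |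
      ∃ (n : ℕ) (x : ℕ → G), x 0 = g ∧ x n = h ∧
        (∀ i < n, (x i)⁻¹ * x (i + 1) ∈ S) ∧
        r = ∑ i ∈ Finset.range n, d (x i) (x (i + 1))}) :
    IsContLeftInvPseudometric G dhat ∧
      (∀ g h : G, dhat g h ≤ M * (wordLength S (g⁻¹ * h) : ℝ)) ∧
      (∀ g h : G, (wordLength S (g⁻¹ * h) : ℝ) ≤ (2 / ε) * dhat g h + 2 / ε + 1) :=
  rosendal_hat_pseudometric_general d hd S hsymm hgen M hM ε hε hball dhat hdhat
end

section
/- (Macbeath) Let G be a group acting by isometries on a connected metric space X, let x ∈ X, and let M > 0 be such that G · B_M(x) = X, where B_M(x) denotes the open ball of radius M about x. Then the set S = {g ∈ G : (g · B_M(x)) ∩ B_M(x) ≠ ∅} generates G. -/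
open Pointwise

/-- Macbeath's lemma: if a group `G` acts by isometries on a connected metric space
`X` and `G • B_M(x) = X`, then `S = {g : g • B_M(x) ∩ B_M(x) ≠ ∅}` generates `G`. -/
theorem macbeath_generates {G X : Type*} [Group G] [MetricSpace X] [ConnectedSpace X]
    [MulAction G X]
    (hiso : ∀ (g : G) (a b : X), dist (g • a) (g • b) = dist a b)
    (x : X) (M : ℝ) (hM : 0 < M)
    (hcobdd : ∀ y : X, ∃ g : G, y ∈ g • Metric.ball x M) :
    Subgroup.closure {g : G | (g • Metric.ball x M ∩ Metric.ball x M).Nonempty} = ⊤ := by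
  set S : Set G := {g : G | (g • Metric.ball x M ∩ Metric.ball x M).Nonempty} with hS
  set H := Subgroup.closure S with hH
  -- translates of balls are balls
  have hball : ∀ (g : G) (y : X), y ∈ g • Metric.ball x M ↔ dist y (g • x) < M := by
    intro g y
    have hd : dist (g⁻¹ • y) x = dist y (g • x) := by
      conv_rhs => rw [← smul_inv_smul g y]
      rw [hiso]
    rw [Set.mem_smul_set_iff_inv_smul_mem, Metric.mem_ball, hd]
  have hsmul : ∀ g : G, g • Metric.ball x M = Metric.ball (g • x) M := by
    intro g; ext y; rw [hball, Metric.mem_ball]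
  -- key: overlapping translated balls give an element of S
  have hkey : ∀ g h : G, (Metric.ball (g • x) M ∩ Metric.ball (h • x) M).Nonempty →
      h⁻¹ * g ∈ S := by
    intro g h ⟨z, hzg, hzh⟩
    refine ⟨h⁻¹ • z, ?_, ?_⟩
    · rw [hsmul, Metric.mem_ball, mul_smul]
      have : dist (h⁻¹ • z) (h⁻¹ • g • x) = dist z (g • x) := hiso h⁻¹ z (g • x)
      rw [this]
      exact Metric.mem_ball.mp hzg
    · rw [Metric.mem_ball]
      have : dist (h⁻¹ • z) (h⁻¹ • h • x) = dist z (h • x) := hiso h⁻¹ z (h • x)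
      rw [inv_smul_smul] at this
      rw [this]
      exact Metric.mem_ball.mp hzh
  -- the H-orbit of the ball
  set Y : Set X := ⋃ h ∈ (H : Set G), Metric.ball (h • x) M with hY
  have hYopen : IsOpen Y := isOpen_biUnion fun _ _ => Metric.isOpen_ball
  have hYcompl : IsOpen Yᶜ := by
    rw [isOpen_iff_forall_mem_open]
    intro y hy
    obtain ⟨g, hg⟩ := hcobdd y
    rw [hsmul] at hg
    refine ⟨Metric.ball (g • x) M, ?_, Metric.isOpen_ball, hg⟩
    intro z hz hzY
    obtain ⟨h, hh, hzh⟩ := Set.mem_iUnion₂.mp hzY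
    have hgS : h⁻¹ * g ∈ S := hkey g h ⟨z, hz, hzh⟩
    have hgH : g ∈ H := by
      have : h * (h⁻¹ * g) ∈ H := H.mul_mem hh (Subgroup.subset_closure hgS)
      rwa [mul_inv_cancel_left] at this
    exact hy (Set.mem_iUnion₂.mpr ⟨g, hgH, hg⟩)
  have hYne : Y.Nonempty := by
    refine ⟨x, Set.mem_iUnion₂.mpr ⟨1, H.one_mem, ?_⟩⟩
    rw [Metric.mem_ball, one_smul, dist_self]; exact hM
  have hYuniv : Y = Set.univ := IsClopen.eq_univ ⟨⟨hYcompl⟩, hYopen⟩ hYne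
  rw [Subgroup.eq_top_iff']
  intro g
  have : g • x ∈ Y := hYuniv ▸ Set.mem_univ _
  obtain ⟨h, hh, hgh⟩ := Set.mem_iUnion₂.mp this
  have hgS : h⁻¹ * g ∈ S := by
    refine hkey g h ⟨g • x, ?_, hgh⟩
    rw [Metric.mem_ball, dist_self]; exact hM
  have : h * (h⁻¹ * g) ∈ H := H.mul_mem hh (Subgroup.subset_closure hgS)
  rwa [mul_inv_cancel_left] at this
end

section
/- (Milnor–Schwarz, key inequality) Let G be a group acting by isometries on a geodesic metric space X, let x ∈ X, and let M > 0 be such that G · B_M(x) = X. Let S = {g ∈ G : (g · B_{3M}(x)) ∩ B_{3M}(x) ≠ ∅}. Then S generates G and for every g ∈ G, the word length of g with respect to S satisfies ‖g‖_S ≤ d(x, g·x)/M + 1. -/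
open Pointwise

/-!
Follow a geodesic from `x` to `g • x` and cut it into `n = ⌊d(x, g • x) / M⌋ + 1` pieces of
length less than `M`. Each subdivision point `y i` lies within `M` of an orbit point `c i • x`,
with `c 0 = 1` and `c n = g`, so consecutive orbit points are less than `3M` apart and every
increment `(c i)⁻¹ * c (i + 1)` moves `x` by less than `3M`, hence lies in `S`. Their product
telescopes to `g`, which is thus a word of length `n ≤ d(x, g • x) / M + 1` in `S`.
-/

open Metric

lemma wordLength_prod_le_length {G : Type*} [Group G] {S : Set G} {l : List G}
    (hl : ∀ s ∈ l, s ∈ S) : wordLength S l.prod ≤ l.length :=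
  Nat.sInf_le ⟨l, rfl, hl, rfl⟩

lemma List.prod_map_range_inv_mul {G : Type*} [Group G] (c : ℕ → G) (n : ℕ) :
    ((List.range n).map fun i => (c i)⁻¹ * c (i + 1)).prod = (c 0)⁻¹ * c n := by
  simpa [div_inv_eq_mul] using List.prod_range_div' n fun i => (c i)⁻¹

lemma exists_chain_of_geodesic {X : Type*} [PseudoMetricSpace X] {a b : X} {γ : ℝ → X}
    (hγa : γ 0 = a) (hγb : γ (dist a b) = b)
    (hγ : ∀ s ∈ Set.Icc 0 (dist a b), ∀ t ∈ Set.Icc 0 (dist a b), dist (γ s) (γ t) = |s - t|)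
    {n : ℕ} (hn : 0 < n) :
    ∃ y : ℕ → X, y 0 = a ∧ y n = b ∧ ∀ i < n, dist (y i) (y (i + 1)) = dist a b / n := by
  set step := dist a b / n
  have hstep : 0 ≤ step := by positivity
  have hmem : ∀ i ≤ n, (i : ℝ) * step ∈ Set.Icc 0 (dist a b) := fun i hi =>
    ⟨by positivity, by
      calc (i : ℝ) * step ≤ n * step := by gcongr
        _ = dist a b := mul_div_cancel₀ _ (by positivity)⟩
  refine ⟨fun i => γ (i * step), by simpa using hγa, ?_, fun i hi => ?_⟩
  · show γ (n * step) = b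
    rw [mul_div_cancel₀ _ (by positivity), hγb]
  · rw [hγ _ (hmem i hi.le) _ (hmem (i + 1) hi), abs_sub_comm, abs_of_nonneg] <;>
      · push_cast; linarith

section IsometricAction

variable {G X : Type*} [Group G] [PseudoMetricSpace X] [MulAction G X]

lemma exists_orbit_points_near_chain {x : X} {M : ℝ} (hM : 0 < M)
    (hnear : ∀ y : X, ∃ h : G, dist y (h • x) < M) {g : G} {n : ℕ} (hn : 0 < n) {y : ℕ → X}
    (hy0 : y 0 = x) (hyn : y n = g • x) :
    ∃ c : ℕ → G, c 0 = 1 ∧ c n = g ∧ ∀ i ≤ n, dist (y i) (c i • x) < M := by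
  classical
  choose h hh using hnear
  refine ⟨fun i => if i = 0 then 1 else if i = n then g else h (y i), by simp,
    by simp [hn.ne'], fun i _ => ?_⟩
  dsimp only
  split_ifs with h0 hn'
  · simpa [h0, hy0] using hM
  · simpa [hn', hyn] using hM
  · exact hh _

variable [IsIsometricSMul G X]

lemma dist_inv_mul_smul (a b : G) (x : X) : dist x ((a⁻¹ * b) • x) = dist (a • x) (b • x) := by
  rw [← dist_smul a, mul_smul, smul_inv_smul]

lemma smul_ball_inter_ball_nonempty {x : X} {s : G} {r : ℝ} (h : dist x (s • x) < r) :
    (s • ball x r ∩ ball x r).Nonempty :=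
  ⟨s • x, by simpa using h.trans_le' dist_nonneg, by simpa [dist_comm] using h⟩

lemma exists_word_of_chain {x : X} {M : ℝ} (hM : 0 < M)
    (hnear : ∀ y : X, ∃ h : G, dist y (h • x) < M) {g : G} {n : ℕ} (hn : 0 < n) {y : ℕ → X}
    (hy0 : y 0 = x) (hyn : y n = g • x) (hstep : ∀ i < n, dist (y i) (y (i + 1)) ≤ M) :
    ∃ l : List G, l.length = n ∧ (∀ s ∈ l, dist x (s • x) < 3 * M) ∧ l.prod = g := by
  obtain ⟨c, hc0, hcn, hc⟩ := exists_orbit_points_near_chain hM hnear hn hy0 hyn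
  refine ⟨(List.range n).map fun i => (c i)⁻¹ * c (i + 1), by simp, ?_, ?_⟩
  · simp only [List.mem_map, List.mem_range]
    rintro _ ⟨i, hi, rfl⟩
    rw [dist_inv_mul_smul]
    calc dist (c i • x) (c (i + 1) • x)
        ≤ dist (c i • x) (y i) + dist (y i) (y (i + 1)) + dist (y (i + 1)) (c (i + 1) • x) :=
          dist_triangle4 _ _ _ _
      _ < M + M + M := by
          have := hc i hi.le
          rw [dist_comm] at this
          linarith [hstep i hi, hc (i + 1) hi]
      _ = 3 * M := by ring
  · rw [List.prod_map_range_inv_mul, hc0, hcn, inv_one, one_mul]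

lemma exists_short_word_of_geodesic {x : X} {M : ℝ} (hM : 0 < M)
    (hnear : ∀ y : X, ∃ h : G, dist y (h • x) < M) {g : G}
    (hgeo : ∃ γ : ℝ → X, γ 0 = x ∧ γ (dist x (g • x)) = g • x ∧
      ∀ s ∈ Set.Icc 0 (dist x (g • x)), ∀ t ∈ Set.Icc 0 (dist x (g • x)),
        dist (γ s) (γ t) = |s - t|) :
    ∃ l : List G, (l.length : ℝ) ≤ dist x (g • x) / M + 1 ∧
      (∀ s ∈ l, dist x (s • x) < 3 * M) ∧ l.prod = g := by
  set n := ⌊dist x (g • x) / M⌋₊ + 1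
  have hn : 0 < n := Nat.succ_pos _
  have hstep : dist x (g • x) / n ≤ M := by
    rw [div_le_iff₀ (by positivity), ← div_le_iff₀' hM]
    exact (Nat.lt_floor_add_one _).le.trans_eq (by push_cast [n]; rfl)
  obtain ⟨γ, hγx, hγg, hγ⟩ := hgeo
  obtain ⟨y, hy0, hyn, hy⟩ := exists_chain_of_geodesic hγx hγg hγ hn
  obtain ⟨l, hl, hlS, rfl⟩ :=
    exists_word_of_chain hM hnear hn hy0 hyn fun i hi => (hy i hi).trans_le hstep
  refine ⟨l, ?_, hlS, rfl⟩
  rw [hl]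
  push_cast [n]
  linarith [Nat.floor_le (by positivity : 0 ≤ dist x (l.prod • x) / M)]

end IsometricAction

/-- Milnor–Schwarz key inequality: if `G` acts by isometries on a geodesic metric
space `X` with `G • B_M(x) = X`, then `S = {g : g • B_{3M}(x) ∩ B_{3M}(x) ≠ ∅}`
generates `G`, and the word length of `g` with respect to `S ∪ S⁻¹` is at most
`dist x (g • x) / M + 1`. -/
theorem milnor_schwarz_inequality {G X : Type*} [Group G] [MetricSpace X] [MulAction G X]
    (hiso : ∀ (g : G) (a b : X), dist (g • a) (g • b) = dist a b)
    (hgeo : ∀ a b : X, ∃ γ : ℝ → X, γ 0 = a ∧ γ (dist a b) = b ∧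
      ∀ s ∈ Set.Icc (0 : ℝ) (dist a b), ∀ t ∈ Set.Icc (0 : ℝ) (dist a b),
        dist (γ s) (γ t) = |s - t|)
    (x : X) (M : ℝ) (hM : 0 < M)
    (hcobdd : ∀ y : X, ∃ g : G, y ∈ g • Metric.ball x M) :
    Subgroup.closure {g : G | (g • Metric.ball x (3 * M) ∩ Metric.ball x (3 * M)).Nonempty}
        = ⊤ ∧
      ∀ g : G,
        (wordLength ({g : G | (g • Metric.ball x (3 * M) ∩
              Metric.ball x (3 * M)).Nonempty} ∪
            {g : G | (g • Metric.ball x (3 * M) ∩ Metric.ball x (3 * M)).Nonempty}⁻¹) g : ℝ)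
          ≤ dist x (g • x) / M + 1 := by
  have : IsIsometricSMul G X := ⟨fun g => Isometry.of_dist_eq (hiso g)⟩
  set S := {g : G | (g • ball x (3 * M) ∩ ball x (3 * M)).Nonempty}
  have hnear (y : X) : ∃ h : G, dist y (h • x) < M := by
    simpa [Metric.smul_ball] using hcobdd y
  have key (g : G) : ∃ l : List G, (l.length : ℝ) ≤ dist x (g • x) / M + 1 ∧
      (∀ s ∈ l, s ∈ S) ∧ l.prod = g := by
    obtain ⟨l, hlen, hlS, hl⟩ := exists_short_word_of_geodesic hM hnear (hgeo x (g • x))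
    exact ⟨l, hlen, fun s hs => smul_ball_inter_ball_nonempty (hlS s hs), hl⟩
  refine ⟨eq_top_iff.2 fun g _ => ?_, fun g => ?_⟩
  · obtain ⟨l, -, hlS, rfl⟩ := key g
    exact list_prod_mem fun s hs => Subgroup.subset_closure (hlS s hs)
  · obtain ⟨l, hlen, hlS, rfl⟩ := key g
    exact (Nat.cast_le.2 (wordLength_prod_le_length fun s hs => Or.inl (hlS s hs))).trans hlen
end

section
/- Let G be a topological group and let G₁ ≤ G₂ ≤ ⋯ be an increasing sequence of open subgroups of G with ⋃_{n ∈ ℕ} G_n = G. If G is generated by a coarsely bounded subset S ⊆ G, then G_n = G for some n. -/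
/-!
Index each `g` by the first level `n` with `g ∈ H n`. Since the chain is increasing, the index is
subadditive in the strong sense `index (g * h) ≤ max (index g) (index h)`, so
`d x y = index (x⁻¹ * y)` is a left-invariant pseudometric; it is constant on left cosets of the
open subgroup `H 0`, hence continuous. A coarsely bounded set `S` is `d`-bounded, so it lies in a
single `H N`, and then so does the subgroup it generates.
-/

open Pointwise

/-- Junk value `0` when `g` lies in no `H n`. -/
noncomputable def chainIndex {G : Type*} [Group G] (H : ℕ → Subgroup G) (g : G) : ℕ :=
  sInf {n : ℕ | g ∈ H n}

noncomputable def chainPseudometric {G : Type*} [Group G] (H : ℕ → Subgroup G) (x y : G) : ℝ :=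
  chainIndex H (x⁻¹ * y)

section Chain

variable {G : Type*} [Group G] {H : ℕ → Subgroup G}

theorem mem_chainIndex {g : G} (hg : ∃ n, g ∈ H n) : g ∈ H (chainIndex H g) :=
  Nat.sInf_mem hg

theorem chainIndex_le {g : G} {n : ℕ} (hg : g ∈ H n) : chainIndex H g ≤ n :=
  Nat.sInf_le hg

theorem chainIndex_one : chainIndex H (1 : G) = 0 :=
  Nat.le_zero.mp (chainIndex_le (one_mem _))

theorem chainIndex_inv (g : G) : chainIndex H g⁻¹ = chainIndex H g := by
  simp only [chainIndex, inv_mem_iff]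

theorem chainIndex_mul_le_max (hH : Monotone H) (hunion : ∀ g : G, ∃ n, g ∈ H n) (g h : G) :
    chainIndex H (g * h) ≤ max (chainIndex H g) (chainIndex H h) :=
  chainIndex_le <| mul_mem (hH (le_max_left _ _) (mem_chainIndex (hunion g)))
    (hH (le_max_right _ _) (mem_chainIndex (hunion h)))

theorem chainIndex_mul_of_mem_zero (hH : Monotone H) (g : G) {h : G} (hh : h ∈ H 0) :
    chainIndex H (g * h) = chainIndex H g := by
  simp only [chainIndex, Subgroup.mul_mem_cancel_right _ (hH (Nat.zero_le _) hh)]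

theorem isLocallyConstant_chainIndex [TopologicalSpace G] [ContinuousMul G] (hH : Monotone H)
    (hopen : IsOpen (H 0 : Set G)) : IsLocallyConstant (chainIndex H) := by
  refine (IsLocallyConstant.iff_eventually_eq _).mpr fun x => ?_
  have hcoset : (fun y => x⁻¹ * y) ⁻¹' (H 0 : Set G) ∈ nhds x :=
    (continuous_const_mul x⁻¹).continuousAt.preimage_mem_nhds
      (hopen.mem_nhds (by simp))
  filter_upwards [hcoset] with y hy
  rw [← chainIndex_mul_of_mem_zero hH x hy, mul_inv_cancel_left]

theorem isContLeftInvPseudometric_chainPseudometric [TopologicalSpace G] [IsTopologicalGroup G]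
    (hH : Monotone H) (hopen : IsOpen (H 0 : Set G)) (hunion : ∀ g : G, ∃ n, g ∈ H n) :
    IsContLeftInvPseudometric G (chainPseudometric H) where
  continuous :=
    ((isLocallyConstant_chainIndex hH hopen).comp ((↑) : ℕ → ℝ)).continuous.comp
      (continuous_fst.inv.mul continuous_snd)
  self x := by simp [chainPseudometric, chainIndex_one]
  symm x y := by
    rw [chainPseudometric, chainPseudometric, ← chainIndex_inv, mul_inv_rev, inv_inv]
  nonneg x y := Nat.cast_nonneg _
  triangle x y z := by
    have hle := (chainIndex_mul_le_max hH hunion (x⁻¹ * y) (y⁻¹ * z)).trans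
      (max_le_add_of_nonneg (Nat.zero_le _) (Nat.zero_le _))
    rw [mul_assoc, mul_inv_cancel_left] at hle
    simp only [chainPseudometric]
    exact_mod_cast hle
  left_inv g x y := by simp only [chainPseudometric, mul_inv_rev, mul_assoc, inv_mul_cancel_left]

theorem exists_subset_of_isCoarselyBounded [TopologicalSpace G] [IsTopologicalGroup G]
    (hH : Monotone H) (hopen : IsOpen (H 0 : Set G)) (hunion : ∀ g : G, ∃ n, g ∈ H n)
    {S : Set G} (hS : IsCoarselyBounded G S) : ∃ N, S ⊆ H N := by
  obtain ⟨M, hM⟩ := hS _ (isContLeftInvPseudometric_chainPseudometric hH hopen hunion)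
  rcases S.eq_empty_or_nonempty with rfl | ⟨s₀, hs₀⟩
  · exact ⟨0, Set.empty_subset _⟩
  refine ⟨max (chainIndex H s₀) ⌈M⌉₊, fun s hs => hH ?_ (mem_chainIndex (hunion s))⟩
  have hdist : chainIndex H (s₀⁻¹ * s) ≤ ⌈M⌉₊ :=
    Nat.cast_le.mp ((hM s₀ hs₀ s hs).trans (Nat.le_ceil M))
  calc chainIndex H s = chainIndex H (s₀ * (s₀⁻¹ * s)) := by rw [mul_inv_cancel_left]
    _ ≤ max (chainIndex H s₀) (chainIndex H (s₀⁻¹ * s)) := chainIndex_mul_le_max hH hunion _ _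
    _ ≤ max (chainIndex H s₀) ⌈M⌉₊ := max_le_max_left _ hdist

end Chain

/-- If `G` is generated by a coarsely bounded set, then any increasing chain of open
subgroups whose union is `G` stabilizes at `G`. -/
theorem eq_top_of_chain_of_cb_generated {G : Type*} [Group G] [TopologicalSpace G]
    [IsTopologicalGroup G]
    (H : ℕ → Subgroup G) (hopen : ∀ n, IsOpen (H n : Set G))
    (hmono : ∀ n, H n ≤ H (n + 1)) (hunion : ∀ g : G, ∃ n, g ∈ H n)
    (S : Set G) (hS : IsCoarselyBounded G S) (hgen : Subgroup.closure S = ⊤) :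
    ∃ n, H n = ⊤ := by
  obtain ⟨N, hSN⟩ :=
    exists_subset_of_isCoarselyBounded (monotone_nat_of_le_succ hmono) (hopen 0) hunion hS
  exact ⟨N, top_le_iff.mp (hgen ▸ (Subgroup.closure_le _).mpr hSN)⟩
end
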